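/- Let α > 0 and β ∈ ℝ with α + β > 0. For R > 0 let κ_0(R) be the unique positive solution of (α + β) R I_0(κR) K_0(κR) = 1, write P(x) = I_0(x) K_0(x), and define ς(R) = α (1 − β R) P(R κ_0(R)) + α κ_0(R) R P'(R κ_0(R)). Then there exists R₀ > 0 such that ς(R) > 0 for all 0 < R < R₀ (hence the first-order correction t_0 = −2 κ_0 P(Rκ_0) ς(R)/(R P'(Rκ_0)) · (1/α) · α is negative for all sufficiently small R). -/

import Mathlib

open MeasureTheory Real Filter Asymptotics Topology

/-- Modified Bessel function of the first kind of integer order `m`. -/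
noncomputable def besselI (m : ℤ) (x : ℝ) : ℝ :=
  (1 / Real.pi) * ∫ θ in (0:ℝ)..Real.pi, Real.exp (x * Real.cos θ) * Real.cos ((m : ℝ) * θ)

/-- Modified Bessel function of the second kind of integer order `m`. -/
noncomputable def besselK (m : ℤ) (x : ℝ) : ℝ :=
  ∫ t in Set.Ioi (0:ℝ), Real.exp (-x * Real.cosh t) * Real.cosh ((m : ℝ) * t)

/-- `ξ_{m,α,d}(κ) = α R_d I_m(κ R_d) K_m(κ R_d) − 1` with `R_d = R + d`. -/
noncomputable def xiA (m : ℤ) (α R d κ : ℝ) : ℝ :=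
  α * (R + d) * (besselI m (κ * (R + d)) * besselK m (κ * (R + d))) - 1

/-- `ξ_{m,β}(κ) = β R I_m(κ R) K_m(κ R) − 1`. -/
noncomputable def xiB (m : ℤ) (β R κ : ℝ) : ℝ :=
  β * R * (besselI m (κ * R) * besselK m (κ * R)) - 1

/-- `ν_m(κ, d) = α β R_d R K_m(κ R_d)² I_m(κ R)²` with `R_d = R + d`. -/
noncomputable def nu (m : ℤ) (α β R κ d : ℝ) : ℝ :=
  α * β * (R + d) * R * (besselK m (κ * (R + d)))^2 * (besselI m (κ * R))^2

/-- `η_m(κ, d) = ν_m(κ, d) − ξ_{m,α,d}(κ) ξ_{m,β}(κ)`. -/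
noncomputable def eta (m : ℤ) (α β R κ d : ℝ) : ℝ :=
  nu m α β R κ d - xiA m α R d κ * xiB m β R κ

/-!
With `x = R κ₀(R)` and `P = I₀ K₀`, the defining equation gives `P(x) = 1 / ((α + β) R)`, which is
large for small `R`. Since `I₀(x) ≤ eˣ` and `K₀(x) ≤ e^{1-x}` for `x ≥ 1`, we have `P ≤ e` on
`[1, ∞)`, so `x < 1`. Writing `x P'(x) = x I₁ K₀ - I₀ · x K₁` with `I₁ ≥ 0` and `x K₁(x) ≤ 1`
gives `x P'(x) ≥ -I₀(x) > -e`, while `(1 - β R) P(x) > 7 / 2`; hence `ς(R) / α > 0`.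
-/

open Set

section BesselFormulas

variable (x : ℝ)

lemma besselI_zero_eq : besselI 0 x = (1 / π) * ∫ θ in (0:ℝ)..π, exp (x * cos θ) := by
  simp [besselI]

lemma besselI_one_eq : besselI 1 x = (1 / π) * ∫ θ in (0:ℝ)..π, exp (x * cos θ) * cos θ := by
  simp [besselI]

lemma besselK_zero_eq : besselK 0 x = ∫ t in Ioi (0:ℝ), exp (-x * cosh t) := by
  simp [besselK]

lemma besselK_one_eq : besselK 1 x = ∫ t in Ioi (0:ℝ), exp (-x * cosh t) * cosh t := by
  simp [besselK]

end BesselFormulas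

section ExpNegMulSinh

variable {x : ℝ}

lemma hasDerivAt_neg_exp_neg_mul_sinh_div (hx : 0 < x) (t : ℝ) :
    HasDerivAt (fun t => -exp (-x * sinh t) / x) (exp (-x * sinh t) * cosh t) t :=
  ((((hasDerivAt_sinh t).const_mul (-x)).exp).neg.div_const x).congr_deriv (by field_simp)

lemma tendsto_neg_exp_neg_mul_sinh_div (hx : 0 < x) :
    Tendsto (fun t => -exp (-x * sinh t) / x) atTop (𝓝 0) := by
  have hsinh : Tendsto sinh atTop atTop :=
    tendsto_atTop_mono' atTop ((eventually_ge_atTop 0).mono fun t ht => self_le_sinh_iff.2 ht)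
      tendsto_id
  simpa using ((tendsto_exp_atBot.comp (hsinh.const_mul_atTop_of_neg (neg_neg_of_pos hx))).neg
    ).div_const x

lemma integrableOn_exp_neg_mul_sinh_mul_cosh (hx : 0 < x) :
    IntegrableOn (fun t => exp (-x * sinh t) * cosh t) (Ioi 0) :=
  integrableOn_Ioi_deriv_of_nonneg (by fun_prop)
    (fun t _ => hasDerivAt_neg_exp_neg_mul_sinh_div hx t) (fun t _ => by positivity)
    (tendsto_neg_exp_neg_mul_sinh_div hx)

lemma integral_exp_neg_mul_sinh_mul_cosh (hx : 0 < x) :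
    ∫ t in Ioi (0:ℝ), exp (-x * sinh t) * cosh t = x⁻¹ := by
  rw [integral_Ioi_of_hasDerivAt_of_nonneg (by fun_prop)
    (fun t _ => hasDerivAt_neg_exp_neg_mul_sinh_div hx t) (fun t _ => by positivity)
    (tendsto_neg_exp_neg_mul_sinh_div hx)]
  simp [neg_div]

end ExpNegMulSinh

section BesselK

variable {x : ℝ}

lemma exp_neg_mul_cosh_le_exp_neg_mul_sinh (hx : 0 ≤ x) (t : ℝ) :
    exp (-x * cosh t) ≤ exp (-x * sinh t) :=
  exp_le_exp.2 (by nlinarith [sinh_lt_cosh t])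

lemma integrableOn_exp_neg_mul_cosh_mul_cosh (hx : 0 < x) :
    IntegrableOn (fun t => exp (-x * cosh t) * cosh t) (Ioi 0) := by
  refine (integrableOn_exp_neg_mul_sinh_mul_cosh hx).mono' (by fun_prop) (ae_of_all _ fun t => ?_)
  rw [norm_of_nonneg (by positivity)]
  exact mul_le_mul_of_nonneg_right (exp_neg_mul_cosh_le_exp_neg_mul_sinh hx.le t) (cosh_pos t).le

lemma integrableOn_exp_neg_mul_cosh (hx : 0 < x) :
    IntegrableOn (fun t => exp (-x * cosh t)) (Ioi 0) := by
  refine (integrableOn_exp_neg_mul_cosh_mul_cosh hx).mono' (by fun_prop) (ae_of_all _ fun t => ?_)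
  rw [norm_of_nonneg (exp_pos _).le]
  exact le_mul_of_one_le_right (exp_pos _).le (one_le_cosh t)

lemma besselK_zero_nonneg (x : ℝ) : 0 ≤ besselK 0 x := by
  rw [besselK_zero_eq]
  exact setIntegral_nonneg measurableSet_Ioi fun t _ => (exp_pos _).le

lemma besselK_one_le_inv (hx : 0 < x) : besselK 1 x ≤ x⁻¹ := by
  rw [besselK_one_eq, ← integral_exp_neg_mul_sinh_mul_cosh hx]
  refine setIntegral_mono_on (integrableOn_exp_neg_mul_cosh_mul_cosh hx)
    (integrableOn_exp_neg_mul_sinh_mul_cosh hx) measurableSet_Ioi fun t _ => ?_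
  exact mul_le_mul_of_nonneg_right (exp_neg_mul_cosh_le_exp_neg_mul_sinh hx.le t) (cosh_pos t).le

/-- For `t > 0`: `x cosh t ≥ cosh t + (x - 1) ≥ t + (x - 1)`. -/
lemma besselK_zero_le_exp (hx : 1 ≤ x) : besselK 0 x ≤ exp (1 - x) := by
  have hbound : ∀ t ∈ Ioi (0:ℝ), exp (-x * cosh t) ≤ exp (1 - x) * exp (-t) := fun t ht => by
    have ht_le : t ≤ cosh t := (self_le_sinh_iff.2 (le_of_lt ht)).trans (sinh_lt_cosh t).le
    rw [← exp_add]
    exact exp_le_exp.2 (by nlinarith [one_le_cosh t])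
  calc besselK 0 x
      ≤ ∫ t in Ioi (0:ℝ), exp (1 - x) * exp (-t) := by
        rw [besselK_zero_eq]
        exact setIntegral_mono_on (integrableOn_exp_neg_mul_cosh (by linarith))
          (by simpa [IntegrableOn] using (exp_neg_integrableOn_Ioi 0 one_pos).const_mul (exp (1 - x)))
          measurableSet_Ioi hbound
    _ = exp (1 - x) := by rw [integral_const_mul, integral_exp_neg_Ioi_zero, mul_one]

lemma hasDerivAt_besselK_zero (hx : 0 < x) : HasDerivAt (besselK 0) (-besselK 1 x) x := by
  have key := hasDerivAt_integral_of_dominated_loc_of_deriv_le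
    (F := fun x t => exp (-x * cosh t)) (F' := fun x t => -(exp (-x * cosh t) * cosh t))
    (bound := fun t => exp (-(x / 2) * cosh t) * cosh t) (μ := volume.restrict (Ioi 0))
    (Ioi_mem_nhds (half_lt_self hx)) (.of_forall fun _ => by fun_prop)
    (integrableOn_exp_neg_mul_cosh hx) (by fun_prop) (ae_of_all _ fun t y hy => ?_)
    (integrableOn_exp_neg_mul_cosh_mul_cosh (half_pos hx)) (ae_of_all _ fun t y _ => ?_)
  · rw [funext besselK_zero_eq, besselK_one_eq, ← integral_neg]
    exact key.2
  · rw [norm_neg, norm_of_nonneg (by positivity)]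
    exact mul_le_mul_of_nonneg_right
      (exp_le_exp.2 (by nlinarith [one_le_cosh t, mem_Ioi.1 hy])) (cosh_pos t).le
  · exact (((hasDerivAt_neg y).mul_const (cosh t)).exp).congr_deriv (by ring)

end BesselK

section BesselI

variable {x : ℝ}

lemma besselI_zero_nonneg (x : ℝ) : 0 ≤ besselI 0 x := by
  rw [besselI_zero_eq]
  exact mul_nonneg (by positivity)
    (intervalIntegral.integral_nonneg pi_pos.le fun θ _ => (exp_pos _).le)

lemma besselI_zero_le_exp (hx : 0 ≤ x) : besselI 0 x ≤ exp x := by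
  have hmono : ∫ θ in (0:ℝ)..π, exp (x * cos θ) ≤ ∫ _ in (0:ℝ)..π, exp x :=
    intervalIntegral.integral_mono_on pi_pos.le ((by fun_prop : Continuous _).intervalIntegrable _ _)
      intervalIntegrable_const fun θ _ => exp_le_exp.2 (by nlinarith [cos_le_one θ])
  calc besselI 0 x ≤ (1 / π) * ∫ _ in (0:ℝ)..π, exp x := by
        rw [besselI_zero_eq]; exact mul_le_mul_of_nonneg_left hmono (by positivity)
    _ = exp x := by
        rw [intervalIntegral.integral_const, sub_zero, smul_eq_mul]
        field_simp

/-- Integration by parts: `∫₀^π e^{x cos θ} cos θ dθ = x ∫₀^π e^{x cos θ} sin² θ dθ`. -/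
lemma besselI_one_nonneg (hx : 0 ≤ x) : 0 ≤ besselI 1 x := by
  rw [besselI_one_eq]
  refine mul_nonneg (by positivity) ?_
  rw [intervalIntegral.integral_mul_deriv_eq_deriv_mul
    (u' := fun θ => exp (x * cos θ) * (x * -sin θ))
    (fun θ _ => by simpa using ((hasDerivAt_cos θ).const_mul x).exp)
    (fun θ _ => hasDerivAt_sin θ) ((by fun_prop : Continuous _).intervalIntegrable _ _)
    (continuous_cos.intervalIntegrable _ _)]
  simp only [sin_pi, sin_zero, mul_zero, sub_zero, zero_sub, ← intervalIntegral.integral_neg]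
  refine intervalIntegral.integral_nonneg pi_pos.le fun θ _ => ?_
  have : -(exp (x * cos θ) * (x * -sin θ) * sin θ) = exp (x * cos θ) * x * sin θ ^ 2 := by ring
  rw [this]
  positivity

lemma hasDerivAt_besselI_zero (x : ℝ) : HasDerivAt (besselI 0) (besselI 1 x) x := by
  set c := |x| + 1
  have key := intervalIntegral.hasDerivAt_integral_of_dominated_loc_of_deriv_le
    (F := fun x θ => exp (x * cos θ)) (F' := fun x θ => exp (x * cos θ) * cos θ)
    (bound := fun _ => exp c) (μ := volume) (a := 0) (b := π)
    (Ioo_mem_nhds (by linarith [neg_abs_le x] : -c < x) (by linarith [le_abs_self x] : x < c))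
    (.of_forall fun _ => by fun_prop) ((by fun_prop : Continuous _).intervalIntegrable _ _)
    (by fun_prop) (ae_of_all _ fun θ _ y hy => ?_) intervalIntegrable_const
    (ae_of_all _ fun θ _ y _ => by simpa using ((hasDerivAt_id y).mul_const (cos θ)).exp)
  · rw [funext besselI_zero_eq, besselI_one_eq]
    exact key.2.const_mul _
  · have hy : |y| < c := abs_lt.2 (mem_Ioo.1 hy)
    have hcos : |cos θ| ≤ 1 := abs_cos_le_one θ
    have harg : y * cos θ ≤ c := (le_abs_self _).trans <| by
      rw [abs_mul]; exact (mul_le_of_le_one_right (abs_nonneg y) hcos).trans hy.le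
    rw [norm_mul, norm_of_nonneg (exp_pos _).le, Real.norm_eq_abs]
    exact (mul_le_of_le_one_right (exp_pos _).le hcos).trans (exp_le_exp.2 harg)

end BesselI

section ProductBound

variable {x : ℝ}

lemma besselI_zero_mul_besselK_zero_le_exp_one (hx : 1 ≤ x) :
    besselI 0 x * besselK 0 x ≤ exp 1 :=
  calc besselI 0 x * besselK 0 x ≤ exp x * exp (1 - x) :=
        mul_le_mul (besselI_zero_le_exp (by linarith)) (besselK_zero_le_exp hx)
          (besselK_zero_nonneg x) (exp_pos _).le
    _ = exp 1 := by rw [← exp_add, add_sub_cancel]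

/-- `x (I₀K₀)' = x I₁ K₀ - I₀ · x K₁`, where the first term is nonnegative and `x K₁ ≤ 1`. -/
lemma neg_besselI_zero_le_mul_deriv_besselI_zero_mul_besselK_zero (hx : 0 < x) :
    -besselI 0 x ≤ x * deriv (fun x => besselI 0 x * besselK 0 x) x := by
  have hP : HasDerivAt (fun x => besselI 0 x * besselK 0 x) _ x :=
    (hasDerivAt_besselI_zero x).mul (hasDerivAt_besselK_zero hx)
  rw [hP.deriv]
  have hxK1 : x * besselK 1 x ≤ 1 :=
    (mul_le_mul_of_nonneg_left (besselK_one_le_inv hx) hx.le).trans (mul_inv_cancel₀ hx.ne').le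
  have hI0 := besselI_zero_nonneg x
  nlinarith [mul_nonneg (mul_nonneg hx.le (besselI_one_nonneg hx.le)) (besselK_zero_nonneg x),
    mul_le_mul_of_nonneg_left hxK1 hI0]

end ProductBound

/-- the quantity `ς(R)` is positive for all sufficiently small `R`. -/
theorem varsigma_pos_small_R (α β : ℝ) (hα : 0 < α) (hγ : 0 < α + β)
    (κ0 : ℝ → ℝ)
    (hκ0 : ∀ R > (0:ℝ), 0 < κ0 R ∧
      (α + β) * R * (besselI 0 (κ0 R * R) * besselK 0 (κ0 R * R)) = 1) :
    ∃ R₀ > (0:ℝ), ∀ R : ℝ, 0 < R → R < R₀ →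
      0 < α * (1 - β * R) * (besselI 0 (R * κ0 R) * besselK 0 (R * κ0 R))
          + α * κ0 R * R * deriv (fun x => besselI 0 x * besselK 0 x) (R * κ0 R) := by
  refine ⟨1 / (7 * (α + β) + 2 * |β|), by positivity, fun R hR hRlt => ?_⟩
  obtain ⟨hκ, hP⟩ := hκ0 R hR
  rw [mul_comm (κ0 R) R] at hP
  set x := R * κ0 R with hx
  have hsmall : R * (7 * (α + β) + 2 * |β|) < 1 := (lt_div_iff₀ (by positivity)).1 hRlt
  have hβR : β * R ≤ 1 / 2 := by nlinarith [le_abs_self β, abs_nonneg β]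
  have hP7 : 7 < besselI 0 x * besselK 0 x := by nlinarith [abs_nonneg β, mul_pos hγ hR]
  have hx1 : x < 1 := by
    by_contra! h
    linarith [besselI_zero_mul_besselK_zero_le_exp_one h, exp_one_lt_three]
  have hI0 : besselI 0 x < 3 :=
    (besselI_zero_le_exp (by positivity)).trans_lt ((exp_lt_exp.2 hx1).trans exp_one_lt_three)
  have hxP' := neg_besselI_zero_le_mul_deriv_besselI_zero_mul_besselK_zero (x := x) (by positivity)
  have hpos : 0 < (1 - β * R) * (besselI 0 x * besselK 0 x)
      + x * deriv (fun x => besselI 0 x * besselK 0 x) x := by nlinarith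
  calc (0:ℝ) < α * ((1 - β * R) * (besselI 0 x * besselK 0 x)
        + x * deriv (fun x => besselI 0 x * besselK 0 x) x) := mul_pos hα hpos
    _ = _ := by rw [hx]; ring
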